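/- arXiv:2308.02264 — 3 statements merged into one kernel-verified Lean document; each statement's English description precedes it below -/
import Mathlib

section
/- Let b, c ∈ C[0,1] with b(x) ≥ β > 0, c(x) ≥ 0 and c(x) − b′(x) ≥ 0 for all x ∈ [0,1]. Define the operator (Av)(x) := ε v′(x) + b(x)v(x) + ∫_x^1 c(s)v(s) ds for v ∈ W₀^{1,∞}(0,1) and ε > 0. Then for every v ∈ W₀^{1,∞}(0,1) and every constant κ ∈ ℝ, ‖v‖_∞ ≤ (2/β) ‖Av + κ‖_∞. -/
/-!
Put `z x = ∫_x^1 c v + κ`, so that `z' = -c v` and the residual is `f = ε v' + b v + z` with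
`|f| ≤ M`. With the integrating factor `E = exp (∫ b / ε)`, the product `G = E v (z + M)` has
`G' = E ((f - z) (z + M) / ε - c v²) < 0` wherever `z < -M`. So `E v min (z + M, 0)` strictly
decreases across every interval inside `{z < -M}`, and vanishes at `0`, `1` and outside that set;
at its extrema this is impossible unless the set is empty, i.e. `z ≥ -M`. Then
`ε v' = f - z - b v` is negative wherever `v > 2M/β`, and the same extremum argument gives
`v ≤ 2M/β`; apply this to `-v` as well.
-/

open Set MeasureTheory Filter Topology

section MaximumPrinciple

variable {g : ℝ → ℝ} {a b x : ℝ} {U : Set ℝ}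

theorem not_isMinOn_of_decreasing_near (hU : U ⊆ Icc a b) (hUx : U ∈ 𝓝[Icc a b] x)
    (hx : x ∈ U) (hxb : x < b) (hanti : ∀ s t, s < t → Icc s t ⊆ U → g t < g s) :
    ¬ IsMinOn g (Icc a b) x := by
  have hUx' : U ∈ 𝓝[≥] x := by
    rw [← nhdsWithin_Icc_eq_nhdsGE hxb]
    exact nhdsWithin_mono _ (Icc_subset_Icc_left (hU hx).1) hUx
  obtain ⟨u, hxu, hsub⟩ := mem_nhdsGE_iff_exists_Icc_subset.1 hUx'
  intro hmin
  exact (hanti x u hxu hsub).not_ge (isMinOn_iff.1 hmin u (hU (hsub (right_mem_Icc.2 hxu.le))))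

theorem not_isMaxOn_of_decreasing_near (hU : U ⊆ Icc a b) (hUx : U ∈ 𝓝[Icc a b] x)
    (hx : x ∈ U) (hax : a < x) (hanti : ∀ s t, s < t → Icc s t ⊆ U → g t < g s) :
    ¬ IsMaxOn g (Icc a b) x := by
  have hUx' : U ∈ 𝓝[≤] x := by
    rw [← nhdsWithin_Icc_eq_nhdsLE hax]
    exact nhdsWithin_mono _ (Icc_subset_Icc_right (hU hx).2) hUx
  obtain ⟨l, hlx, hsub⟩ := mem_nhdsLE_iff_exists_Icc_subset.1 hUx'
  intro hmax
  exact (hanti l x hlx hsub).not_ge (isMaxOn_iff.1 hmax l (hU (hsub (left_mem_Icc.2 hlx.le))))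

theorem eq_empty_of_decreasing_inside_of_eq_zero_outside (hab : a < b)
    (hg : ContinuousOn g (Icc a b)) (ha : g a = 0) (hb : g b = 0)
    (hU : U ⊆ Icc a b) (hUopen : ∀ x ∈ U, U ∈ 𝓝[Icc a b] x)
    (hzero : ∀ x ∈ Icc a b, x ∉ U → g x = 0)
    (hanti : ∀ s t, s < t → Icc s t ⊆ U → g t < g s) : U = ∅ := by
  have hne : (Icc a b).Nonempty := nonempty_Icc.2 hab.le
  have hnonneg : ∀ x ∈ Icc a b, 0 ≤ g x := by
    obtain ⟨x₁, hx₁, hmin⟩ := isCompact_Icc.exists_isMinOn hne hg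
    suffices 0 ≤ g x₁ from fun x hx => this.trans (isMinOn_iff.1 hmin x hx)
    by_contra! hneg
    have hx₁U : x₁ ∈ U := by_contra fun h => hneg.ne (hzero x₁ hx₁ h)
    have hx₁b : x₁ < b := hx₁.2.lt_of_ne (by rintro rfl; exact hneg.ne hb)
    exact not_isMinOn_of_decreasing_near hU (hUopen x₁ hx₁U) hx₁U hx₁b hanti hmin
  have hnonpos : ∀ x ∈ Icc a b, g x ≤ 0 := by
    obtain ⟨x₂, hx₂, hmax⟩ := isCompact_Icc.exists_isMaxOn hne hg
    suffices g x₂ ≤ 0 from fun x hx => (isMaxOn_iff.1 hmax x hx).trans this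
    by_contra! hpos
    have hx₂U : x₂ ∈ U := by_contra fun h => hpos.ne' (hzero x₂ hx₂ h)
    have hax₂ : a < x₂ := hx₂.1.lt_of_ne (by rintro rfl; exact hpos.ne' ha)
    exact not_isMaxOn_of_decreasing_near hU (hUopen x₂ hx₂U) hx₂U hax₂ hanti hmax
  refine eq_empty_iff_forall_notMem.2 fun x hx => ?_
  have hgx : g x = 0 := le_antisymm (hnonpos x (hU hx)) (hnonneg x (hU hx))
  rcases (hU hx).2.lt_or_eq with hxb | rfl
  · refine not_isMinOn_of_decreasing_near hU (hUopen x hx) hx hxb hanti ?_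
    exact isMinOn_iff.2 fun y hy => hgx ▸ hnonneg y hy
  · refine not_isMaxOn_of_decreasing_near hU (hUopen x hx) hx hab hanti ?_
    exact isMaxOn_iff.2 fun y hy => hgx ▸ hnonpos y hy

end MaximumPrinciple

theorem AbsolutelyContinuousOnInterval.lt_of_ae_deriv_neg {f : ℝ → ℝ} {s t : ℝ}
    (hf : AbsolutelyContinuousOnInterval f s t) (hst : s < t)
    (hd : ∀ᵐ x ∂volume.restrict (Ioo s t), deriv f x < 0) : f t < f s := by
  rw [Measure.restrict_congr_set Ioo_ae_eq_Ioc] at hd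
  have hneg : ∫ x in s..t, deriv f x < ∫ _ in s..t, (0 : ℝ) := by
    refine intervalIntegral.integral_lt_integral_of_ae_le_of_measure_setOfPred_lt_ne_zero hst.le
      hf.intervalIntegrable_deriv intervalIntegrable_const (hd.mono fun x hx => hx.le) ?_
    intro h0
    have hfalse : ∀ᵐ x ∂volume.restrict (Ioc s t), False :=
      (hd.and (measure_eq_zero_iff_ae_notMem.1 h0)).mono fun x hx => hx.2 hx.1
    rw [eventually_false_iff_eq_bot, ae_eq_bot, Measure.restrict_eq_zero, Real.volume_Ioc,
      ENNReal.ofReal_eq_zero] at hfalse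
    linarith
  rw [hf.integral_deriv_eq_sub, intervalIntegral.integral_zero] at hneg
  linarith

/-- `A v + κ = ε v' + b v + integralTail c v κ`. -/
noncomputable def integralTail (c v : ℝ → ℝ) (κ x : ℝ) : ℝ :=
  (∫ s in x..1, c s * v s) + κ

-- `b` is extended constantly beyond `[0, 1]`, which makes the factor `C¹` on all of `ℝ`.
noncomputable def integratingFactor (ε : ℝ) (b : ℝ → ℝ) (x : ℝ) : ℝ :=
  Real.exp ((∫ t in (0:ℝ)..x, IccExtend zero_le_one (fun y : Icc (0:ℝ) 1 => b y) t) / ε)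

section

variable {ε κ M : ℝ} {b c v : ℝ → ℝ}

theorem integralTail_neg :
    integralTail c (fun x => -v x) (-κ) = fun x => -integralTail c v κ x := by
  funext x
  simp [integralTail, intervalIntegral.integral_neg]
  ring

theorem hasDerivAt_integralTail (hcv : ContinuousOn (fun s => c s * v s) (Icc 0 1)) {x : ℝ}
    (hx : x ∈ Ioo (0:ℝ) 1) : HasDerivAt (integralTail c v κ) (-(c x * v x)) x :=
  (intervalIntegral.integral_hasDerivAt_left
    (hcv.mono (uIcc_of_le hx.2.le ▸ Icc_subset_Icc_left hx.1.le)).intervalIntegrable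
    (hcv.mono Ioo_subset_Icc_self |>.stronglyMeasurableAtFilter isOpen_Ioo x hx)
    (hcv.continuousAt (Icc_mem_nhds hx.1 hx.2))).add_const κ

theorem absolutelyContinuousOnInterval_integralTail
    (hcv : ContinuousOn (fun s => c s * v s) (Icc 0 1)) :
    AbsolutelyContinuousOnInterval (integralTail c v κ) 0 1 := by
  have hint : IntervalIntegrable (fun s => c s * v s) volume 0 1 :=
    hcv.intervalIntegrable_of_Icc zero_le_one
  have hprim := (hint.absolutelyContinuousOnInterval_intervalIntegral (c := 1) (by simp)).neg
  have hsum := hprim.add (LipschitzWith.const κ).lipschitzOnWith.absolutelyContinuousOnInterval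
  have heq : (-fun x => ∫ s in 1..x, c s * v s) + (fun _ => κ) = integralTail c v κ := by
    funext x
    simp [integralTail, intervalIntegral.integral_symm x 1]
  rwa [heq] at hsum

theorem hasDerivAt_integratingFactor (hb : ContinuousOn b (Icc 0 1)) {x : ℝ}
    (hx : x ∈ Icc (0:ℝ) 1) :
    HasDerivAt (integratingFactor ε b) (integratingFactor ε b x * (b x / ε)) x := by
  have hcont : Continuous (IccExtend zero_le_one (fun y : Icc (0:ℝ) 1 => b y)) :=
    continuous_IccExtend_iff.2 (hb.comp_continuous continuous_subtype_val Subtype.prop)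
  have := ((hcont.integral_hasStrictDerivAt 0 x).hasDerivAt.div_const ε).exp
  rw [IccExtend_of_mem _ _ hx] at this
  exact this

theorem contDiff_integratingFactor (hb : ContinuousOn b (Icc 0 1)) :
    ContDiff ℝ 1 (integratingFactor ε b) := by
  have hcont : Continuous (IccExtend zero_le_one (fun y : Icc (0:ℝ) 1 => b y)) :=
    continuous_IccExtend_iff.2 (hb.comp_continuous continuous_subtype_val Subtype.prop)
  refine ((contDiff_one_iff_deriv.2 ⟨fun x => ?_, ?_⟩).div_const ε).exp
  · exact (hcont.integral_hasStrictDerivAt 0 x).hasDerivAt.differentiableAt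
  · convert hcont using 1
    funext x
    exact (hcont.integral_hasStrictDerivAt 0 x).hasDerivAt.deriv

end

structure IsResidualBound (ε : ℝ) (b c v v' : ℝ → ℝ) (κ M : ℝ) : Prop where
  eps_pos : 0 < ε
  continuousOn_b : ContinuousOn b (Icc 0 1)
  continuousOn_c : ContinuousOn c (Icc 0 1)
  c_nonneg : ∀ x ∈ Icc (0:ℝ) 1, 0 ≤ c x
  lipschitzOnWith : ∃ K, LipschitzOnWith K v (Icc 0 1)
  hasDerivAt : ∀ᵐ x ∂volume.restrict (Icc (0:ℝ) 1), HasDerivAt v (v' x) x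
  left : v 0 = 0
  right : v 1 = 0
  bound : ∀ᵐ x ∂volume.restrict (Icc (0:ℝ) 1),
    |ε * v' x + b x * v x + integralTail c v κ x| ≤ M

namespace IsResidualBound

variable {ε β κ M : ℝ} {b c v v' : ℝ → ℝ}

theorem neg (h : IsResidualBound ε b c v v' κ M) :
    IsResidualBound ε b c (fun x => -v x) (fun x => -v' x) (-κ) M where
  eps_pos := h.eps_pos
  continuousOn_b := h.continuousOn_b
  continuousOn_c := h.continuousOn_c
  c_nonneg := h.c_nonneg
  lipschitzOnWith := let ⟨K, hK⟩ := h.lipschitzOnWith; ⟨K, hK.neg⟩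
  hasDerivAt := h.hasDerivAt.mono fun _ hx => hx.neg
  left := by simp [h.left]
  right := by simp [h.right]
  bound := h.bound.mono fun x hx => by
    rw [integralTail_neg, ← abs_neg]
    convert hx using 2
    ring

theorem bound_nonneg (h : IsResidualBound ε b c v v' κ M) : 0 ≤ M := by
  have : volume.restrict (Icc (0:ℝ) 1) ≠ 0 := by simp
  have := ae_neBot.2 this
  obtain ⟨x, hx⟩ := h.bound.exists
  exact (abs_nonneg _).trans hx

theorem continuousOn (h : IsResidualBound ε b c v v' κ M) : ContinuousOn v (Icc 0 1) :=
  let ⟨_, hK⟩ := h.lipschitzOnWith; hK.continuousOn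

theorem absolutelyContinuousOnInterval (h : IsResidualBound ε b c v v' κ M) :
    AbsolutelyContinuousOnInterval v 0 1 :=
  let ⟨_, hK⟩ := h.lipschitzOnWith
  (uIcc_of_le (zero_le_one (α := ℝ)) ▸ hK).absolutelyContinuousOnInterval

theorem ae_Ioo (h : IsResidualBound ε b c v v' κ M) {s t : ℝ} (hst : Icc s t ⊆ Icc 0 1) :
    ∀ᵐ x ∂volume.restrict (Ioo s t), x ∈ Ioo s t ∧ HasDerivAt v (v' x) x ∧
      |ε * v' x + b x * v x + integralTail c v κ x| ≤ M := by
  have hsub : Ioo s t ⊆ Icc 0 1 := Ioo_subset_Icc_self.trans hst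
  filter_upwards [ae_restrict_mem measurableSet_Ioo,
    ae_restrict_of_ae_restrict_of_subset hsub h.hasDerivAt,
    ae_restrict_of_ae_restrict_of_subset hsub h.bound] with x hx hvx hbx
  exact ⟨hx, hvx, hbx⟩

theorem deriv_integratingFactor_mul_neg (h : IsResidualBound ε b c v v' κ M) {x : ℝ}
    (hx : x ∈ Ioo (0:ℝ) 1) (hvx : HasDerivAt v (v' x) x)
    (hres : |ε * v' x + b x * v x + integralTail c v κ x| ≤ M)
    (hzx : integralTail c v κ x < -M) :
    deriv (fun y => integratingFactor ε b y * v y * (integralTail c v κ y + M)) x < 0 := by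
  set E := integratingFactor ε b
  set z := integralTail c v κ
  have hcv : ContinuousOn (fun s => c s * v s) (Icc 0 1) := h.continuousOn_c.mul h.continuousOn
  have hd := ((hasDerivAt_integratingFactor (ε := ε) h.continuousOn_b
    (Ioo_subset_Icc_self hx)).fun_mul hvx).fun_mul
    ((hasDerivAt_integralTail (κ := κ) hcv hx).add_const M)
  rw [hd.deriv]
  have hEx : 0 < E x := Real.exp_pos _
  have hε := h.eps_pos
  have hcx := h.c_nonneg x (Ioo_subset_Icc_self hx)
  have hflux : 0 < ε * v' x + b x * v x := by linarith [neg_abs_le (ε * v' x + b x * v x + z x)]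
  have hsplit : (E x * (b x / ε) * v x + E x * v' x) * (z x + M) + E x * v x * -(c x * v x)
      = E x / ε * (ε * v' x + b x * v x) * (z x + M) - E x * c x * v x ^ 2 := by
    field_simp
    ring
  have hfirst : E x / ε * (ε * v' x + b x * v x) * (z x + M) < 0 :=
    mul_neg_of_pos_of_neg (by positivity) (by linarith)
  rw [hsplit]
  nlinarith [mul_nonneg (mul_nonneg hEx.le hcx) (sq_nonneg (v x))]

theorem neg_le_integralTail (h : IsResidualBound ε b c v v' κ M) :
    ∀ x ∈ Icc (0:ℝ) 1, -M ≤ integralTail c v κ x := by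
  set E := integratingFactor ε b
  set z := integralTail c v κ
  have hcv : ContinuousOn (fun s => c s * v s) (Icc 0 1) := h.continuousOn_c.mul h.continuousOn
  have hz : AbsolutelyContinuousOnInterval z 0 1 := absolutelyContinuousOnInterval_integralTail hcv
  have hzc : ContinuousOn z (Icc 0 1) := uIcc_of_le (zero_le_one (α := ℝ)) ▸ hz.continuousOn
  have hE : ContDiff ℝ 1 E := contDiff_integratingFactor h.continuousOn_b
  have hG : AbsolutelyContinuousOnInterval (fun y => E y * v y * (z y + M)) 0 1 :=
    ((hE.contDiffOn.absolutelyContinuousOnInterval.fun_mul h.absolutelyContinuousOnInterval).fun_mul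
      (hz.fun_add (LipschitzWith.const M).lipschitzOnWith.absolutelyContinuousOnInterval))
  set U := {x ∈ Icc (0:ℝ) 1 | z x < -M}
  have hU : U = ∅ := by
    refine eq_empty_of_decreasing_inside_of_eq_zero_outside
      (g := fun x => E x * v x * min (z x + M) 0) zero_lt_one
      (by have := hE.continuous; have := h.continuousOn; fun_prop)
      (by simp [h.left]) (by simp [h.right]) (sep_subset _ _)
      (fun x hx => inter_mem self_mem_nhdsWithin (hzc x hx.1 (Iio_mem_nhds hx.2))) ?_ ?_
    · intro x hx hxU
      have : -M ≤ z x := not_lt.1 fun hlt => hxU ⟨hx, hlt⟩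
      simp [min_eq_right (by linarith : (0:ℝ) ≤ z x + M)]
    intro s t hst hsub
    have hst01 : Icc s t ⊆ Icc 0 1 := hsub.trans (sep_subset _ _)
    have hmin : ∀ y ∈ Icc s t, min (z y + M) 0 = z y + M := fun y hy =>
      min_eq_left (by linarith [(hsub hy).2])
    simp only [hmin s (left_mem_Icc.2 hst.le), hmin t (right_mem_Icc.2 hst.le)]
    refine (hG.mono ?_).lt_of_ae_deriv_neg hst ?_
    · rw [uIcc_of_le hst.le, uIcc_of_le zero_le_one]
      exact hst01
    filter_upwards [h.ae_Ioo hst01] with x ⟨hx, hvx, hres⟩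
    have hx01 : x ∈ Ioo (0:ℝ) 1 :=
      ⟨(hst01 (left_mem_Icc.2 hst.le)).1.trans_lt hx.1,
        hx.2.trans_le (hst01 (right_mem_Icc.2 hst.le)).2⟩
    have hzx : z x < -M := (hsub (Ioo_subset_Icc_self hx)).2
    exact h.deriv_integratingFactor_mul_neg hx01 hvx hres hzx
  intro x hx
  by_contra! hlt
  exact hU.subset ⟨hx, hlt⟩

theorem le_two_div_mul (h : IsResidualBound ε b c v v' κ M) (hβ : 0 < β)
    (hbβ : ∀ x ∈ Icc (0:ℝ) 1, β ≤ b x) : ∀ x ∈ Icc (0:ℝ) 1, v x ≤ 2 / β * M := by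
  set L := 2 / β * M
  have hL : 0 ≤ L := by have := h.bound_nonneg; positivity
  have hβL : β * L = 2 * M := by simp only [L]; field_simp
  set U := {x ∈ Icc (0:ℝ) 1 | L < v x}
  have hU : U = ∅ := by
    refine eq_empty_of_decreasing_inside_of_eq_zero_outside
      (g := fun x => max (v x - L) 0) zero_lt_one
      (by have := h.continuousOn; fun_prop) (by simp [h.left, hL]) (by simp [h.right, hL])
      (sep_subset _ _)
      (fun x hx => inter_mem self_mem_nhdsWithin (h.continuousOn x hx.1 (Ioi_mem_nhds hx.2))) ?_ ?_
    · intro x hx hxU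
      have : v x ≤ L := not_lt.1 fun hlt => hxU ⟨hx, hlt⟩
      simp [this]
    intro s t hst hsub
    have hst01 : Icc s t ⊆ Icc 0 1 := hsub.trans (sep_subset _ _)
    have hmax : ∀ y ∈ Icc s t, max (v y - L) 0 = v y - L := fun y hy =>
      max_eq_left (by linarith [(hsub hy).2])
    simp only [hmax s (left_mem_Icc.2 hst.le), hmax t (right_mem_Icc.2 hst.le),
      sub_lt_sub_iff_right]
    refine (h.absolutelyContinuousOnInterval.mono ?_).lt_of_ae_deriv_neg hst ?_
    · rw [uIcc_of_le hst.le, uIcc_of_le zero_le_one]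
      exact hst01
    filter_upwards [h.ae_Ioo hst01] with x ⟨hx, hvx, hres⟩
    have hx01 := hst01 (Ioo_subset_Icc_self hx)
    have hvL : L < v x := (hsub (Ioo_subset_Icc_self hx)).2
    have hbv : β * L < b x * v x := by nlinarith [hbβ x hx01]
    have hres' := le_of_abs_le hres
    have htail := h.neg_le_integralTail x hx01
    rw [hvx.deriv]
    nlinarith [h.eps_pos]
  intro x hx
  by_contra! hlt
  exact hU.subset ⟨hx, hlt⟩

end IsResidualBound

theorem stmt0_general
    (ε β : ℝ) (hε : 0 < ε) (hβ : 0 < β)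
    (b c : ℝ → ℝ)
    (hb : ContinuousOn b (Icc 0 1)) (hc : ContinuousOn c (Icc 0 1))
    (hbβ : ∀ x ∈ Icc (0:ℝ) 1, β ≤ b x)
    (hc0 : ∀ x ∈ Icc (0:ℝ) 1, 0 ≤ c x)
    -- v ∈ W₀^{1,∞}(0,1): Lipschitz on [0,1], a.e. differentiable with derivative v',
    -- vanishing at the endpoints
    (v v' : ℝ → ℝ) (K : NNReal) (hlip : LipschitzOnWith K v (Icc 0 1))
    (hv' : ∀ᵐ x ∂(volume.restrict (Icc (0:ℝ) 1)), HasDerivAt v (v' x) x)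
    (hv0 : v 0 = 0) (hv1 : v 1 = 0)
    (κ M : ℝ)
    -- M is an essential bound for |Av + κ| on [0,1]
    (hM : ∀ᵐ x ∂(volume.restrict (Icc (0:ℝ) 1)),
        |ε * v' x + b x * v x + (∫ s in x..(1:ℝ), c s * v s) + κ| ≤ M) :
    ∀ t ∈ Icc (0:ℝ) 1, |v t| ≤ 2 / β * M := by
  have h : IsResidualBound ε b c v v' κ M :=
    ⟨hε, hb, hc, hc0, ⟨K, hlip⟩, hv', hv0, hv1,
      hM.mono fun x hx => by rwa [integralTail, ← add_assoc]⟩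
  intro t ht
  have hupper := h.le_two_div_mul hβ hbβ t ht
  have hlower := h.neg.le_two_div_mul hβ hbβ t ht
  exact abs_le.2 ⟨by linarith, hupper⟩

/-- stability bound (a) for the operator
`(Av)(x) = ε v'(x) + b(x) v(x) + ∫_x^1 c v` on `W₀^{1,∞}(0,1)`:
`‖v‖_∞ ≤ (2/β) ‖Av + κ‖_∞` for every constant `κ`. -/
theorem stmt0
    (ε β : ℝ) (hε : 0 < ε) (hβ : 0 < β)
    (b c b' : ℝ → ℝ)
    (hb : ContinuousOn b (Icc 0 1)) (hc : ContinuousOn c (Icc 0 1))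
    (hbderiv : ∀ x ∈ Icc (0:ℝ) 1, HasDerivAt b (b' x) x)
    (hbβ : ∀ x ∈ Icc (0:ℝ) 1, β ≤ b x)
    (hc0 : ∀ x ∈ Icc (0:ℝ) 1, 0 ≤ c x)
    (hcb : ∀ x ∈ Icc (0:ℝ) 1, 0 ≤ c x - b' x)
    -- v ∈ W₀^{1,∞}(0,1): Lipschitz on [0,1], a.e. differentiable with derivative v',
    -- vanishing at the endpoints
    (v v' : ℝ → ℝ) (K : NNReal) (hlip : LipschitzOnWith K v (Icc 0 1))
    (hv' : ∀ᵐ x ∂(volume.restrict (Icc (0:ℝ) 1)), HasDerivAt v (v' x) x)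
    (hv0 : v 0 = 0) (hv1 : v 1 = 0)
    (κ M : ℝ)
    -- M is an essential bound for |Av + κ| on [0,1]
    (hM : ∀ᵐ x ∂(volume.restrict (Icc (0:ℝ) 1)),
        |ε * v' x + b x * v x + (∫ s in x..(1:ℝ), c s * v s) + κ| ≤ M) :
    ∀ t ∈ Icc (0:ℝ) 1, |v t| ≤ 2 / β * M :=
  stmt0_general ε β hε hβ b c hb hc hbβ hc0 v v' K hlip hv' hv0 hv1 κ M hM
end

section
/- Let ψ ∈ C[0,1] and on each mesh interval I_i = (x_{i−1},x_i) define ψ̂(x) = ψ_{i−1/2} + (x − x_{i−1/2})(ψ_i − ψ_{i−1})/h_i. If ψ ∈ C³[0,1], then for each i, | ∫_{x_{i−1}}^{x_i} (ψ(s) − ψ̂(s)) ds − h_i (ψ_i − 2ψ_{i−1/2} + ψ_{i−1})/6 | ≤ C h_i⁴ ‖ψ‴‖_{∞}, for a constant C independent of the mesh and ψ. -/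
/-!
Since `∫ ψ̂ = h ψ_{i-1/2}` (the linear part of `ψ̂` integrates to zero about the midpoint), the
quantity to estimate is exactly the error of Simpson's rule `h (ψ_{i-1} + 4 ψ_{i-1/2} + ψ_i) / 6`.
Simpson's rule is exact on quadratics, so `ψ` may be replaced by its second-order Taylor remainder
at the midpoint, which three applications of the mean value theorem bound by `‖ψ‴‖_∞ h³`.
-/

open Set MeasureTheory

noncomputable def simpsonError (f : ℝ → ℝ) (p q : ℝ) : ℝ :=
  (∫ s in p..q, f s) - (q - p) / 6 * (f p + 4 * f ((p + q) / 2) + f q)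

theorem simpsonError_quadratic (a b c x₀ p q : ℝ) :
    simpsonError (fun s => a + b * (s - x₀) + c * (s - x₀) ^ 2) p q = 0 := by
  have hF : ∀ s, HasDerivAt (fun s => a * s + b / 2 * (s - x₀) ^ 2 + c / 3 * (s - x₀) ^ 3)
      (a + b * (s - x₀) + c * (s - x₀) ^ 2) s := fun s => by
    have h := (hasDerivAt_id' s).sub_const x₀
    exact (((hasDerivAt_id' s).const_mul a).add ((h.pow 2).const_mul (b / 2))
      |>.add ((h.pow 3).const_mul (c / 3))).congr_deriv (by norm_num; ring)
  rw [simpsonError, intervalIntegral.integral_eq_sub_of_hasDerivAt (fun s _ => hF s)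
    (Continuous.intervalIntegrable (by fun_prop) _ _)]
  ring

theorem simpsonError_add_quadratic {f : ℝ → ℝ} {p q : ℝ} (hf : IntervalIntegrable f volume p q)
    (a b c x₀ : ℝ) :
    simpsonError (fun s => f s + (a + b * (s - x₀) + c * (s - x₀) ^ 2)) p q
      = simpsonError f p q := by
  have hquad := simpsonError_quadratic a b c x₀ p q
  rw [simpsonError] at hquad
  rw [simpsonError, simpsonError, intervalIntegral.integral_add hf
    (Continuous.intervalIntegrable (by fun_prop) _ _)]
  linarith

theorem abs_simpsonError_le {f : ℝ → ℝ} {p q B : ℝ} (hpq : p ≤ q)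
    (hB : ∀ s ∈ Icc p q, |f s| ≤ B) :
    |simpsonError f p q| ≤ 2 * B * (q - p) := by
  have hint : |∫ s in p..q, f s| ≤ B * (q - p) := by
    have := intervalIntegral.norm_integral_le_of_norm_le_const (f := f)
      fun s hs => (Real.norm_eq_abs _).trans_le (hB s (Ioc_subset_Icc_self ((uIoc_of_le hpq) ▸ hs)))
    rwa [Real.norm_eq_abs, abs_of_nonneg (sub_nonneg.2 hpq)] at this
  have hnodes : |f p + 4 * f ((p + q) / 2) + f q| ≤ 6 * B := by
    have hp := abs_le.1 (hB p (left_mem_Icc.2 hpq))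
    have hm := abs_le.1 (hB ((p + q) / 2) ⟨by linarith, by linarith⟩)
    have hq := abs_le.1 (hB q (right_mem_Icc.2 hpq))
    exact abs_le.2 ⟨by linarith, by linarith⟩
  calc |simpsonError f p q|
      ≤ |∫ s in p..q, f s| + (q - p) / 6 * |f p + 4 * f ((p + q) / 2) + f q| := by
        rw [simpsonError]
        refine (abs_sub _ _).trans_eq ?_
        rw [abs_mul, abs_of_nonneg (by linarith : 0 ≤ (q - p) / 6)]
    _ ≤ B * (q - p) + (q - p) / 6 * (6 * B) := by gcongr
    _ = 2 * B * (q - p) := by ring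

theorem abs_le_mul_of_hasDerivAt_of_eq_zero {g g' : ℝ → ℝ} {p q x₀ C : ℝ} (hx₀ : x₀ ∈ Icc p q)
    (hg₀ : g x₀ = 0) (hg : ∀ t ∈ Icc p q, HasDerivAt g (g' t) t)
    (hC : ∀ t ∈ Icc p q, |g' t| ≤ C) :
    ∀ t ∈ Icc p q, |g t| ≤ C * (q - p) := by
  intro t ht
  have hmvt := (convex_Icc p q).norm_image_sub_le_of_norm_hasDerivWithin_le
    (fun s hs => (hg s hs).hasDerivWithinAt) hC hx₀ ht
  rw [hg₀, sub_zero] at hmvt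
  calc |g t| ≤ C * |t - x₀| := hmvt
    _ ≤ C * (q - p) :=
      mul_le_mul_of_nonneg_left (Real.dist_le_of_mem_Icc ht hx₀) ((abs_nonneg _).trans (hC t ht))

theorem abs_sub_taylor_two_le {f f' f'' f''' : ℝ → ℝ} {p q x₀ M : ℝ} (hx₀ : x₀ ∈ Icc p q)
    (hf : ∀ t ∈ Icc p q, HasDerivAt f (f' t) t)
    (hf' : ∀ t ∈ Icc p q, HasDerivAt f' (f'' t) t)
    (hf'' : ∀ t ∈ Icc p q, HasDerivAt f'' (f''' t) t)
    (hM : ∀ t ∈ Icc p q, |f''' t| ≤ M) :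
    ∀ t ∈ Icc p q,
      |f t - (f x₀ + f' x₀ * (t - x₀) + f'' x₀ / 2 * (t - x₀) ^ 2)| ≤ M * (q - p) ^ 3 := by
  have h₂ := abs_le_mul_of_hasDerivAt_of_eq_zero (g := fun t => f'' t - f'' x₀) hx₀ (sub_self _)
    (fun t ht => (hf'' t ht).sub_const _) hM
  have h₁ := abs_le_mul_of_hasDerivAt_of_eq_zero
    (g := fun t => f' t - (f' x₀ + f'' x₀ * (t - x₀))) hx₀ (by simp)
    (fun t ht => ((hf' t ht).sub (((hasDerivAt_id' t).sub_const x₀).const_mul (f'' x₀)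
      |>.const_add (f' x₀))).congr_deriv (by ring)) h₂
  have h₀ := abs_le_mul_of_hasDerivAt_of_eq_zero
    (g := fun t => f t - (f x₀ + f' x₀ * (t - x₀) + f'' x₀ / 2 * (t - x₀) ^ 2)) hx₀ (by simp)
    (fun t ht => ((hf t ht).sub ((((hasDerivAt_id' t).sub_const x₀).const_mul (f' x₀)
      |>.const_add (f x₀)).add ((((hasDerivAt_id' t).sub_const x₀).pow 2).const_mul
        (f'' x₀ / 2)))).congr_deriv (by norm_num; ring)) h₁
  exact fun t ht => (h₀ t ht).trans_eq (by ring)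

/-- the Simpson-rule evaluation `h_i(ψ_i - 2ψ_{i-1/2} + ψ_{i-1})/6` of
`∫_{I_i}(ψ - ψ̂)` is accurate to order `h_i⁴ ‖ψ‴‖_∞` for `ψ ∈ C³[0,1]`, with a constant
`C` independent of the mesh interval and of `ψ`. -/
theorem stmt9 :
    ∃ C : ℝ, 0 < C ∧
      ∀ (ψ ψ' ψ'' ψ''' : ℝ → ℝ) (p q M : ℝ),
        p < q → Icc p q ⊆ Icc 0 1 →
        (∀ t ∈ Icc (0:ℝ) 1, HasDerivAt ψ (ψ' t) t) →
        (∀ t ∈ Icc (0:ℝ) 1, HasDerivAt ψ' (ψ'' t) t) →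
        (∀ t ∈ Icc (0:ℝ) 1, HasDerivAt ψ'' (ψ''' t) t) →
        ContinuousOn ψ''' (Icc 0 1) →
        (∀ t ∈ Icc (0:ℝ) 1, |ψ''' t| ≤ M) →
        |(∫ s in p..q, (ψ s - (ψ ((p + q) / 2)
              + (s - (p + q) / 2) * ((ψ q - ψ p) / (q - p)))))
            - (q - p) * (ψ q - 2 * ψ ((p + q) / 2) + ψ p) / 6|
          ≤ C * (q - p) ^ 4 * M := by
  refine ⟨2, two_pos, fun ψ ψ' ψ'' ψ''' p q M hpq hpq01 hψ hψ' hψ'' _ hM => ?_⟩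
  have hm : (p + q) / 2 ∈ Icc p q := ⟨by linarith, by linarith⟩
  set m := (p + q) / 2
  set k := (ψ q - ψ p) / (q - p)
  have hψint : IntervalIntegrable ψ volume p q := ContinuousOn.intervalIntegrable_of_Icc hpq.le
    fun t ht => (hψ t (hpq01 ht)).continuousAt.continuousWithinAt
  set R := fun s => ψ s - (ψ m + ψ' m * (s - m) + ψ'' m / 2 * (s - m) ^ 2)
  have hRint : IntervalIntegrable R volume p q :=
    hψint.sub (Continuous.intervalIntegrable (by fun_prop) _ _)
  have hsplit : (fun s => ψ s - (ψ m + (s - m) * k))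
      = fun s => R s + (0 + (ψ' m - k) * (s - m) + ψ'' m / 2 * (s - m) ^ 2) := by
    funext s; simp only [R]; ring
  have hsimpson : (∫ s in p..q, (ψ s - (ψ m + (s - m) * k))) - (q - p) * (ψ q - 2 * ψ m + ψ p) / 6
      = simpsonError R p q := by
    rw [← simpsonError_add_quadratic hRint, ← hsplit, simpsonError]
    ring
  have hR : ∀ t ∈ Icc p q, |R t| ≤ M * (q - p) ^ 3 :=
    abs_sub_taylor_two_le hm (fun t ht => hψ t (hpq01 ht)) (fun t ht => hψ' t (hpq01 ht))
      (fun t ht => hψ'' t (hpq01 ht)) (fun t ht => hM t (hpq01 ht))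
  rw [hsimpson]
  exact (abs_simpsonError_le hpq.le hR).trans_eq (by ring)
end

section
/- Under the assumptions of the a posteriori error analysis (u solves the ODE, V and W solve the coarse and bisected-mesh upwind schemes, U = 2W − V, Ū the piecewise-linear interpolant of U), the residual in the integrated form satisfies, for x ∈ I_k = (x_{k−1}, x_k) and k = 1,…,N−1: (A(u − Ū))(x) = Ψ(x) + B(x) + Γ_k + Δ_k + (x_{k−1/2} − x)[ (f − cŪ)_{k−1/2} + (bU)_{x,k} ] + α − 2α^W + α^V, where Ψ(x) = ∫_x^1 (ψ − ψ̂)(s) ds + (x_k − x)(x − x_{k−1})/2 · ψ_{x,k} with ψ = f − cŪ, B(x) = (\widebar{bU} − bŪ)(x), α = εu′(1) + b(1)u(1), α^V = ε(V_N − V_{N−1})/h_N + b_N V_N, α^W = ε(W_N − W_{N−1/2})/(h_N/2) + b_N W_N. -/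
/-!
Integrating `-εu'' - (bu)' + cu = f` from `x` to `1` expresses the flux `εu' + bu` at `x`,
plus `∫_x^1 cu`, through `∫_x^1 f` and the outflow `α`. Summing the upwind schemes from node
`k` to `N` is the discrete counterpart: it expresses the fluxes of `V` and `W` at `x_k`
through `α^V`, `α^W` and Riemann sums of `f - cV`, `f - cW`. Since the midpoint rule is exact
for the affine pieces of `ψ̂`, `∫_x^1 ψ̂` is such a Riemann sum of `ψ = f - cŪ` too, and
subtracting the combination `2W - V` from the continuous identity leaves exactly the terms
`Γ_k`, `Δ_k`, the linear-in-`x` corrections and `α - 2α^W + α^V`.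
-/

open Set MeasureTheory

theorem integral_affine (C m D a r : ℝ) :
    ∫ s in a..r, (C + (s - m) * D) = (r - a) * C + ((r - m) ^ 2 - (a - m) ^ 2) / 2 * D := by
  rw [intervalIntegral.integral_add intervalIntegrable_const
      ((by fun_prop : Continuous fun s : ℝ => (s - m) * D).intervalIntegrable _ _),
    intervalIntegral.integral_mul_const, intervalIntegral.integral_comp_sub_right (fun s => s),
    integral_id, intervalIntegral.integral_const, smul_eq_mul]

theorem integral_eq_of_eqOn_Ioo_affine {g : ℝ → ℝ} {p q C m D a r : ℝ}
    (hg : ∀ s ∈ Ioo p q, g s = C + (s - m) * D) (ha : a ∈ Icc p q) (hr : r ∈ Icc p q) :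
    ∫ s in a..r, g s = (r - a) * C + ((r - m) ^ 2 - (a - m) ^ 2) / 2 * D := by
  rw [← integral_affine]
  refine intervalIntegral.integral_congr_uIoo fun s hs => hg s ⟨?_, ?_⟩
  · exact (le_min ha.1 hr.1).trans_lt hs.1
  · exact hs.2.trans_le (max_le ha.2 hr.2)

theorem intervalIntegrable_of_eqOn_Ioo_affine {g : ℝ → ℝ} {p q C m D : ℝ} (hpq : p ≤ q)
    (hg : ∀ s ∈ Ioo p q, g s = C + (s - m) * D) : IntervalIntegrable g volume p q :=
  (by fun_prop : Continuous fun s => C + (s - m) * D).intervalIntegrable p q |>.congr_uIoo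
    fun s hs => (hg s (uIoo_of_le hpq ▸ hs)).symm

theorem flux_add_integral_eq {ε a r : ℝ} {b b' c f u u' u'' : ℝ → ℝ} (har : a ≤ r)
    (hb : ∀ s ∈ Icc a r, HasDerivAt b (b' s) s) (hb' : ContinuousOn b' (Icc a r))
    (hc : ContinuousOn c (Icc a r)) (hf : ContinuousOn f (Icc a r))
    (hu : ∀ s ∈ Icc a r, HasDerivAt u (u' s) s) (hu' : ∀ s ∈ Icc a r, HasDerivAt u' (u'' s) s)
    (hu'' : ContinuousOn u'' (Icc a r))
    (hode : ∀ s ∈ Ioo a r, -(ε * u'' s) - (b' s * u s + b s * u' s) + c s * u s = f s) :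
    ε * u' a + b a * u a + ∫ s in a..r, c s * u s
      = (∫ s in a..r, f s) + (ε * u' r + b r * u r) := by
  have hbc : ContinuousOn b (Icc a r) := fun s hs => (hb s hs).continuousAt.continuousWithinAt
  have huc : ContinuousOn u (Icc a r) := fun s hs => (hu s hs).continuousAt.continuousWithinAt
  have hu'c : ContinuousOn u' (Icc a r) := fun s hs => (hu' s hs).continuousAt.continuousWithinAt
  have hcu : IntervalIntegrable (fun s => c s * u s) volume a r :=
    (hc.mul huc).intervalIntegrable_of_Icc har
  have hfi : IntervalIntegrable f volume a r := hf.intervalIntegrable_of_Icc har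
  have hftc := intervalIntegral.integral_eq_sub_of_hasDerivAt
    (f := fun y => ε * u' y + b y * u y) (f' := fun s => ε * u'' s + (b' s * u s + b s * u' s))
    (fun s hs => ((hu' s (uIcc_of_le har ▸ hs)).const_mul ε).add
      ((hb s (uIcc_of_le har ▸ hs)).mul (hu s (uIcc_of_le har ▸ hs))))
    ((continuousOn_const.mul hu'').add ((hb'.mul huc).add (hbc.mul hu'c))
      |>.intervalIntegrable_of_Icc har)
  have hode_int : ∫ s in a..r, (ε * u'' s + (b' s * u s + b s * u' s))
      = (∫ s in a..r, c s * u s) - ∫ s in a..r, f s := by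
    rw [← intervalIntegral.integral_sub hcu hfi]
    refine intervalIntegral.integral_congr_Ioo_of_le har fun s hs => ?_
    linarith [hode s hs]
  linear_combination hftc - hode_int

theorem integral_residual_eq {ε a r : ℝ} {b b' c f u u' u'' Ubar ψ g : ℝ → ℝ} (har : a ≤ r)
    (hb : ∀ s ∈ Icc a r, HasDerivAt b (b' s) s) (hb' : ContinuousOn b' (Icc a r))
    (hc : ContinuousOn c (Icc a r)) (hf : ContinuousOn f (Icc a r))
    (hu : ∀ s ∈ Icc a r, HasDerivAt u (u' s) s) (hu' : ∀ s ∈ Icc a r, HasDerivAt u' (u'' s) s)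
    (hu'' : ContinuousOn u'' (Icc a r))
    (hode : ∀ s ∈ Ioo a r, -(ε * u'' s) - (b' s * u s + b s * u' s) + c s * u s = f s)
    (hcUbar : IntervalIntegrable (fun s => c s * Ubar s) volume a r)
    (hψ : ∀ s, ψ s = f s - c s * Ubar s) (hg : IntervalIntegrable g volume a r) :
    ε * u' a + b a * (u a - Ubar a) + ∫ s in a..r, c s * (u s - Ubar s)
      = (∫ s in a..r, (ψ s - g s)) + (∫ s in a..r, g s) - b a * Ubar a
        + (ε * u' r + b r * u r) := by
  have hfi : IntervalIntegrable f volume a r := hf.intervalIntegrable_of_Icc har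
  have hcu : IntervalIntegrable (fun s => c s * u s) volume a r :=
    (hc.mul fun s hs => (hu s hs).continuousAt.continuousWithinAt).intervalIntegrable_of_Icc har
  have hsplit₁ : ∫ s in a..r, c s * (u s - Ubar s)
      = (∫ s in a..r, c s * u s) - ∫ s in a..r, c s * Ubar s := by
    simp only [mul_sub]
    exact intervalIntegral.integral_sub hcu hcUbar
  have hsplit₂ : ∫ s in a..r, (ψ s - g s)
      = (∫ s in a..r, f s) - (∫ s in a..r, c s * Ubar s) - ∫ s in a..r, g s := by
    simp only [hψ]
    rw [intervalIntegral.integral_sub (hfi.sub hcUbar) hg, intervalIntegral.integral_sub hfi hcUbar]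
  linear_combination flux_add_integral_eq har hb hb' hc hf hu hu' hu'' hode + hsplit₁ - hsplit₂

section Mesh

variable {x : ℕ → ℝ} {N k : ℕ} {t : ℝ}

theorem mesh_mem_Icc (hx : ∀ i < N, x i < x (i + 1)) {i : ℕ} (hi : i ≤ N) :
    x i ∈ Icc (x 0) (x N) :=
  have hmono := (strictMonoOn_Iic_of_lt_succ (ψ := x) (n := N)
    fun m hm => by simpa using hx m hm).monotoneOn
  ⟨hmono (Nat.zero_le N) hi (Nat.zero_le i), hmono hi (mem_Iic.mpr le_rfl) hi⟩

theorem mesh_pred_lt (hx : ∀ i < N, x i < x (i + 1)) {i : ℕ} (hi : 1 ≤ i) (hiN : i ≤ N) :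
    x (i - 1) < x i := by
  simpa [Nat.sub_add_cancel hi] using hx (i - 1) (by omega)

variable {g : ℝ → ℝ}

theorem intervalIntegrable_of_mesh
    (hg : ∀ i, 1 ≤ i → i ≤ N → IntervalIntegrable g volume (x (i - 1)) (x i))
    (hk : 1 ≤ k) (hkN : k ≤ N) (ht : t ∈ Icc (x (k - 1)) (x k)) :
    IntervalIntegrable g volume t (x N) :=
  ((hg k hk hkN).mono_set (uIcc_subset_uIcc (Icc_subset_uIcc ht) right_mem_uIcc)).trans
    (IntervalIntegrable.trans_iterate_Ico hkN fun i hi => by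
      simpa using hg (i + 1) (by omega) hi.2)

theorem integral_eq_add_sum_of_mesh
    (hg : ∀ i, 1 ≤ i → i ≤ N → IntervalIntegrable g volume (x (i - 1)) (x i))
    (hk : 1 ≤ k) (hkN : k ≤ N) (ht : t ∈ Icc (x (k - 1)) (x k)) :
    ∫ s in t..x N, g s
      = (∫ s in t..x k, g s) + ∑ i ∈ Finset.Ico k N, ∫ s in x i..x (i + 1), g s := by
  have hpiece (i : ℕ) (hi : i ∈ Set.Ico k N) : IntervalIntegrable g volume (x i) (x (i + 1)) := by
    simpa using hg (i + 1) (by omega) hi.2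
  rw [intervalIntegral.sum_integral_adjacent_intervals_Ico hkN hpiece,
    intervalIntegral.integral_add_adjacent_intervals
      ((hg k hk hkN).mono_set (uIcc_subset_uIcc (Icc_subset_uIcc ht) right_mem_uIcc))
      (IntervalIntegrable.trans_iterate_Ico hkN hpiece)]

variable {ψ : ℝ → ℝ}

theorem intervalIntegrable_piecewise_affine (hx : ∀ i < N, x i < x (i + 1))
    (hg : ∀ i, 1 ≤ i → i ≤ N → ∀ s ∈ Ioo (x (i - 1)) (x i),
      g s = ψ ((x (i - 1) + x i) / 2)
        + (s - (x (i - 1) + x i) / 2) * ((ψ (x i) - ψ (x (i - 1))) / (x i - x (i - 1))))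
    (hk : 1 ≤ k) (hkN : k ≤ N) (ht : t ∈ Icc (x (k - 1)) (x k)) :
    IntervalIntegrable g volume t (x N) :=
  intervalIntegrable_of_mesh (fun i hi hiN =>
    intervalIntegrable_of_eqOn_Ioo_affine (mesh_pred_lt hx hi hiN).le (hg i hi hiN)) hk hkN ht

theorem integral_piecewise_affine (hx : ∀ i < N, x i < x (i + 1))
    (hg : ∀ i, 1 ≤ i → i ≤ N → ∀ s ∈ Ioo (x (i - 1)) (x i),
      g s = ψ ((x (i - 1) + x i) / 2)
        + (s - (x (i - 1) + x i) / 2) * ((ψ (x i) - ψ (x (i - 1))) / (x i - x (i - 1))))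
    (hk : 1 ≤ k) (hkN : k ≤ N) (ht : t ∈ Icc (x (k - 1)) (x k)) :
    ∫ s in t..x N, g s
      = (x k - t) * ψ ((x (k - 1) + x k) / 2)
        + (x k - t) * (t - x (k - 1)) / 2 * ((ψ (x k) - ψ (x (k - 1))) / (x k - x (k - 1)))
        + ∑ i ∈ Finset.Ico k N, (x (i + 1) - x i) * ψ ((x i + x (i + 1)) / 2) := by
  have hmid (i : ℕ) (hi : i ∈ Finset.Ico k N) :
      ∫ s in x i..x (i + 1), g s = (x (i + 1) - x i) * ψ ((x i + x (i + 1)) / 2) := by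
    have hlt := mesh_pred_lt hx (Nat.le_add_left 1 i) (Finset.mem_Ico.1 hi).2
    have h := integral_eq_of_eqOn_Ioo_affine (hg (i + 1) (by omega) (Finset.mem_Ico.1 hi).2)
      (left_mem_Icc.2 hlt.le) (right_mem_Icc.2 hlt.le)
    simp only [Nat.add_sub_cancel] at h
    rw [h]
    ring
  rw [integral_eq_add_sum_of_mesh (fun i hi hiN =>
      intervalIntegrable_of_eqOn_Ioo_affine (mesh_pred_lt hx hi hiN).le (hg i hi hiN)) hk hkN ht,
    integral_eq_of_eqOn_Ioo_affine (hg k hk hkN) ht (right_mem_Icc.2 (mesh_pred_lt hx hk hkN).le),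
    Finset.sum_congr rfl hmid]
  ring

theorem intervalIntegrable_mul_piecewise_affine {c Ubar : ℝ → ℝ} {U : ℕ → ℝ}
    (hx : ∀ i < N, x i < x (i + 1)) (hc : ContinuousOn c (Icc (x 0) (x N)))
    (hUbar : ∀ i, 1 ≤ i → i ≤ N → ∀ s ∈ Icc (x (i - 1)) (x i),
      Ubar s = (U (i - 1) + U i) / 2
        + (s - (x (i - 1) + x i) / 2) * ((U i - U (i - 1)) / (x i - x (i - 1))))
    (hk : 1 ≤ k) (hkN : k ≤ N) (ht : t ∈ Icc (x (k - 1)) (x k)) :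
    IntervalIntegrable (fun s => c s * Ubar s) volume t (x N) := by
  refine intervalIntegrable_of_mesh (fun i hi hiN => ?_) hk hkN ht
  have hpiece : Icc (x (i - 1)) (x i) ⊆ Icc (x 0) (x N) :=
    Icc_subset_Icc (mesh_mem_Icc hx (by omega)).1 (mesh_mem_Icc hx hiN).2
  refine ContinuousOn.intervalIntegrable_of_Icc (mesh_pred_lt hx hi hiN).le
    (((hc.mono hpiece).mul (Continuous.continuousOn (by fun_prop : Continuous fun s =>
      (U (i - 1) + U i) / 2
        + (s - (x (i - 1) + x i) / 2) * ((U i - U (i - 1)) / (x i - x (i - 1)))))).congr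
      fun s hs => ?_)
  rw [Pi.mul_apply, hUbar i hi hiN s hs]

end Mesh

theorem eq_add_sum_of_sub_eq {F G : ℕ → ℝ} {k N : ℕ} (hkN : k ≤ N)
    (h : ∀ i ∈ Finset.Ico k N, F i - F (i + 1) = G i) :
    F k = F N + ∑ i ∈ Finset.Ico k N, G i := by
  have htelescope := Finset.sum_Ico_sub F hkN
  rw [Finset.sum_sub_distrib] at htelescope
  rw [← Finset.sum_congr rfl h, Finset.sum_sub_distrib]
  linarith

section Upwind

variable {ε : ℝ} {b c f : ℝ → ℝ} {x : ℕ → ℝ} {N : ℕ}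

theorem upwind_flux_eq {V : ℕ → ℝ} (hx : ∀ i < N, x i < x (i + 1))
    (hscheme : ∀ i, 1 ≤ i → i ≤ N - 1 →
      -(ε / (x (i + 1) - x i)) *
          ((V (i + 1) - V i) / (x (i + 1) - x i) - (V i - V (i - 1)) / (x i - x (i - 1)))
        - (b (x (i + 1)) * V (i + 1) - b (x i) * V i) / (x (i + 1) - x i)
        + c (x i) * V i = f (x i))
    {k : ℕ} (hk : 1 ≤ k) (hkN : k ≤ N) :
    ε * (V k - V (k - 1)) / (x k - x (k - 1)) + b (x k) * V k
      = ε * (V N - V (N - 1)) / (x N - x (N - 1)) + b (x N) * V N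
        + ∑ i ∈ Finset.Ico k N, (x (i + 1) - x i) * (f (x i) - c (x i) * V i) := by
  refine eq_add_sum_of_sub_eq
    (F := fun j => ε * (V j - V (j - 1)) / (x j - x (j - 1)) + b (x j) * V j) hkN fun i hi => ?_
  obtain ⟨hki, hiN⟩ := Finset.mem_Ico.1 hi
  have hh : x (i + 1) - x i ≠ 0 := (sub_pos.2 (hx i hiN)).ne'
  rw [← hscheme i (by omega) (by omega), Nat.add_sub_cancel]
  field_simp
  ring

theorem bisected_flux_eq {Wn Wm : ℕ → ℝ} (hx : ∀ i < N, x i < x (i + 1))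
    (hscheme₁ : ∀ i, i ≤ N - 1 →
      -(ε / ((x (i + 1) - x i) / 2)) *
          ((Wn (i + 1) - Wm (i + 1)) / ((x (i + 1) - x i) / 2)
            - (Wm (i + 1) - Wn i) / ((x (i + 1) - x i) / 2))
        - (b (x (i + 1)) * Wn (i + 1)
            - b ((x i + x (i + 1)) / 2) * Wm (i + 1)) / ((x (i + 1) - x i) / 2)
        + c ((x i + x (i + 1)) / 2) * Wm (i + 1) = f ((x i + x (i + 1)) / 2))
    (hscheme₂ : ∀ i, 1 ≤ i → i ≤ N - 1 →
      -(ε / ((x (i + 1) - x i) / 2)) *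
          ((Wm (i + 1) - Wn i) / ((x (i + 1) - x i) / 2)
            - (Wn i - Wm i) / ((x i - x (i - 1)) / 2))
        - (b ((x i + x (i + 1)) / 2) * Wm (i + 1) - b (x i) * Wn i)
            / ((x (i + 1) - x i) / 2)
        + c (x i) * Wn i = f (x i))
    {k : ℕ} (hk : 1 ≤ k) (hkN : k ≤ N) :
    ε * (Wn k - Wm k) / ((x k - x (k - 1)) / 2) + b (x k) * Wn k
      = ε * (Wn N - Wm N) / ((x N - x (N - 1)) / 2) + b (x N) * Wn N
        + ∑ i ∈ Finset.Ico k N, (x (i + 1) - x i) / 2 *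
            ((f (x i) - c (x i) * Wn i)
              + (f ((x i + x (i + 1)) / 2) - c ((x i + x (i + 1)) / 2) * Wm (i + 1))) := by
  refine eq_add_sum_of_sub_eq
    (F := fun j => ε * (Wn j - Wm j) / ((x j - x (j - 1)) / 2) + b (x j) * Wn j) hkN
    fun i hi => ?_
  obtain ⟨hki, hiN⟩ := Finset.mem_Ico.1 hi
  have hh : x (i + 1) - x i ≠ 0 := (sub_pos.2 (hx i hiN)).ne'
  rw [← hscheme₁ i (by omega), ← hscheme₂ i (by omega) (by omega), Nat.add_sub_cancel]
  field_simp
  ring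

theorem discrete_residual_eq {Ubar ψ : ℝ → ℝ} {V Wn Wm U : ℕ → ℝ} {Γ Δ αV αW : ℝ}
    (hx : ∀ i < N, x i < x (i + 1))
    (hschemeV : ∀ i, 1 ≤ i → i ≤ N - 1 →
      -(ε / (x (i + 1) - x i)) *
          ((V (i + 1) - V i) / (x (i + 1) - x i) - (V i - V (i - 1)) / (x i - x (i - 1)))
        - (b (x (i + 1)) * V (i + 1) - b (x i) * V i) / (x (i + 1) - x i)
        + c (x i) * V i = f (x i))
    (hscheme₁ : ∀ i, i ≤ N - 1 →
      -(ε / ((x (i + 1) - x i) / 2)) *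
          ((Wn (i + 1) - Wm (i + 1)) / ((x (i + 1) - x i) / 2)
            - (Wm (i + 1) - Wn i) / ((x (i + 1) - x i) / 2))
        - (b (x (i + 1)) * Wn (i + 1)
            - b ((x i + x (i + 1)) / 2) * Wm (i + 1)) / ((x (i + 1) - x i) / 2)
        + c ((x i + x (i + 1)) / 2) * Wm (i + 1) = f ((x i + x (i + 1)) / 2))
    (hscheme₂ : ∀ i, 1 ≤ i → i ≤ N - 1 →
      -(ε / ((x (i + 1) - x i) / 2)) *
          ((Wm (i + 1) - Wn i) / ((x (i + 1) - x i) / 2)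
            - (Wn i - Wm i) / ((x i - x (i - 1)) / 2))
        - (b ((x i + x (i + 1)) / 2) * Wm (i + 1) - b (x i) * Wn i)
            / ((x (i + 1) - x i) / 2)
        + c (x i) * Wn i = f (x i))
    (hU : ∀ i, U i = 2 * Wn i - V i) (hψ : ∀ t, ψ t = f t - c t * Ubar t)
    {k : ℕ} (hk : 1 ≤ k) (hkN : k ≤ N - 1)
    (hΓ : Γ =
      (∑ i ∈ Finset.Icc k (N - 1), (x (i + 1) - x i) *
          (c ((x i + x (i + 1)) / 2) * (Wm (i + 1) - Ubar ((x i + x (i + 1)) / 2))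
            + c (x i) * (Wn i - V i)))
        + (x k - x (k - 1)) / 2 *
            (c ((x (k - 1) + x k) / 2) * (Wm k - Ubar ((x (k - 1) + x k) / 2))))
    (hΔ : Δ =
      b ((x (k - 1) + x k) / 2) * Wm k - b (x (k - 1)) * Wn (k - 1)
        - (b (x k) * V k - b (x (k - 1)) * V (k - 1)) / 2)
    (hαV : αV = ε * (V N - V (N - 1)) / (x N - x (N - 1)) + b (x N) * V N)
    (hαW : αW = ε * (Wn N - Wm N) / ((x N - x (N - 1)) / 2) + b (x N) * Wn N) :
    ε * ((U k - U (k - 1)) / (x k - x (k - 1)))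
      = (∑ i ∈ Finset.Ico k N, (x (i + 1) - x i) * ψ ((x i + x (i + 1)) / 2))
        + (x k - x (k - 1)) / 2 * ψ ((x (k - 1) + x k) / 2)
        - (b (x (k - 1)) * U (k - 1) + b (x k) * U k) / 2
        - Γ - Δ + 2 * αW - αV := by
  have hV := upwind_flux_eq hx hschemeV hk (by omega : k ≤ N)
  have hW := bisected_flux_eq hx hscheme₁ hscheme₂ hk (by omega : k ≤ N)
  have hh : x k - x (k - 1) ≠ 0 := (sub_pos.2 (mesh_pred_lt hx hk (by omega))).ne'
  have hWmid : ε * (Wm k - Wn (k - 1)) / ((x k - x (k - 1)) / 2)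
        + b ((x (k - 1) + x k) / 2) * Wm k
      = ε * (Wn k - Wm k) / ((x k - x (k - 1)) / 2) + b (x k) * Wn k
        + (x k - x (k - 1)) / 2
          * (f ((x (k - 1) + x k) / 2) - c ((x (k - 1) + x k) / 2) * Wm k) := by
    have := hscheme₁ (k - 1) (by omega)
    rw [Nat.sub_add_cancel hk] at this
    rw [← this]
    field_simp
    ring
  have hIcc : Finset.Icc k (N - 1) = Finset.Ico k N := by ext i; simp; omega
  have hsum : ∑ i ∈ Finset.Ico k N, (x (i + 1) - x i) * ψ ((x i + x (i + 1)) / 2)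
      = (∑ i ∈ Finset.Ico k N, (x (i + 1) - x i) *
          (c ((x i + x (i + 1)) / 2) * (Wm (i + 1) - Ubar ((x i + x (i + 1)) / 2))
            + c (x i) * (Wn i - V i)))
        + 2 * (∑ i ∈ Finset.Ico k N, (x (i + 1) - x i) / 2 *
            ((f (x i) - c (x i) * Wn i)
              + (f ((x i + x (i + 1)) / 2) - c ((x i + x (i + 1)) / 2) * Wm (i + 1))))
        - ∑ i ∈ Finset.Ico k N, (x (i + 1) - x i) * (f (x i) - c (x i) * V i) := by
    rw [Finset.mul_sum, ← Finset.sum_add_distrib, ← Finset.sum_sub_distrib]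
    refine Finset.sum_congr rfl fun i _ => ?_
    rw [hψ]
    ring
  rw [hsum, hΓ, hIcc, hΔ, hαV, hαW, hψ, hU k, hU (k - 1)]
  simp only [div_div_eq_mul_div] at hW hWmid ⊢
  linear_combination 2 * hW - hV + hWmid

end Upwind

theorem stmt19_general
    (ε : ℝ)
    (b b' c f : ℝ → ℝ)
    (hbderiv : ∀ t ∈ Icc (0:ℝ) 1, HasDerivAt b (b' t) t)
    (hb' : ContinuousOn b' (Icc 0 1))
    (hc : ContinuousOn c (Icc 0 1)) (hf : ContinuousOn f (Icc 0 1))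
    -- the exact solution u ∈ C²[0,1]
    (u u' u'' : ℝ → ℝ)
    (huderiv : ∀ t ∈ Icc (0:ℝ) 1, HasDerivAt u (u' t) t)
    (hu'deriv : ∀ t ∈ Icc (0:ℝ) 1, HasDerivAt u' (u'' t) t)
    (hu'' : ContinuousOn u'' (Icc 0 1))
    (hode : ∀ t ∈ Ioo (0:ℝ) 1,
        -(ε * u'' t) - (b' t * u t + b t * u' t) + c t * u t = f t)
    -- the mesh
    (N : ℕ) (x : ℕ → ℝ)
    (hx0 : x 0 = 0) (hxN : x N = 1) (hmono : ∀ i < N, x i < x (i + 1))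
    -- the coarse-mesh upwind solution V
    (V : ℕ → ℝ)
    (hschemeV : ∀ i, 1 ≤ i → i ≤ N - 1 →
      -(ε / (x (i + 1) - x i)) *
          ((V (i + 1) - V i) / (x (i + 1) - x i) - (V i - V (i - 1)) / (x i - x (i - 1)))
        - (b (x (i + 1)) * V (i + 1) - b (x i) * V i) / (x (i + 1) - x i)
        + c (x i) * V i = f (x i))
    -- the bisected-mesh upwind solution W
    (Wn Wm : ℕ → ℝ)
    (hschemeW1 : ∀ i, i ≤ N - 1 →
      -(ε / ((x (i + 1) - x i) / 2)) *
          ((Wn (i + 1) - Wm (i + 1)) / ((x (i + 1) - x i) / 2)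
            - (Wm (i + 1) - Wn i) / ((x (i + 1) - x i) / 2))
        - (b (x (i + 1)) * Wn (i + 1)
            - b ((x i + x (i + 1)) / 2) * Wm (i + 1)) / ((x (i + 1) - x i) / 2)
        + c ((x i + x (i + 1)) / 2) * Wm (i + 1) = f ((x i + x (i + 1)) / 2))
    (hschemeW2 : ∀ i, 1 ≤ i → i ≤ N - 1 →
      -(ε / ((x (i + 1) - x i) / 2)) *
          ((Wm (i + 1) - Wn i) / ((x (i + 1) - x i) / 2)
            - (Wn i - Wm i) / ((x i - x (i - 1)) / 2))
        - (b ((x i + x (i + 1)) / 2) * Wm (i + 1) - b (x i) * Wn i)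
            / ((x (i + 1) - x i) / 2)
        + c (x i) * Wn i = f (x i))
    -- U = 2W - V and its piecewise-linear interpolant
    (U : ℕ → ℝ) (hU : ∀ i, U i = 2 * Wn i - V i)
    (Ubar : ℝ → ℝ)
    (hUbar : ∀ i, 1 ≤ i → i ≤ N → ∀ t ∈ Icc (x (i - 1)) (x i),
      Ubar t = (U (i - 1) + U i) / 2
        + (t - (x (i - 1) + x i) / 2) * ((U i - U (i - 1)) / (x i - x (i - 1))))
    -- ψ = f - cŪ and the interpolant ψ̂
    (ψ : ℝ → ℝ) (hψ : ∀ t, ψ t = f t - c t * Ubar t)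
    (ψhat : ℝ → ℝ)
    (hψhat : ∀ i, 1 ≤ i → i ≤ N → ∀ t ∈ Ioo (x (i - 1)) (x i),
      ψhat t = ψ ((x (i - 1) + x i) / 2)
        + (t - (x (i - 1) + x i) / 2) * ((ψ (x i) - ψ (x (i - 1))) / (x i - x (i - 1))))
    -- the interpolant of the nodal values b(x_i) U_i, and B = bU-bar - bŪ
    (bUbar : ℝ → ℝ)
    (hbUbar : ∀ i, 1 ≤ i → i ≤ N → ∀ t ∈ Icc (x (i - 1)) (x i),
      bUbar t = (b (x (i - 1)) * U (i - 1) + b (x i) * U i) / 2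
        + (t - (x (i - 1) + x i) / 2) *
            ((b (x i) * U i - b (x (i - 1)) * U (i - 1)) / (x i - x (i - 1))))
    -- the terms Γ_k and Δ_k
    (Γ Δ : ℕ → ℝ)
    (hΓ : ∀ k, Γ k =
      (∑ i ∈ Finset.Icc k (N - 1), (x (i + 1) - x i) *
          (c ((x i + x (i + 1)) / 2) * (Wm (i + 1) - Ubar ((x i + x (i + 1)) / 2))
            + c (x i) * (Wn i - V i)))
        + (x k - x (k - 1)) / 2 *
            (c ((x (k - 1) + x k) / 2) * (Wm k - Ubar ((x (k - 1) + x k) / 2))))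
    (hΔ : ∀ k, Δ k =
      b ((x (k - 1) + x k) / 2) * Wm k - b (x (k - 1)) * Wn (k - 1)
        - (b (x k) * V k - b (x (k - 1)) * V (k - 1)) / 2)
    -- the constants α, α^V, α^W
    (α αV αW : ℝ)
    (hα : α = ε * u' 1 + b 1 * u 1)
    (hαV : αV = ε * (V N - V (N - 1)) / (x N - x (N - 1)) + b (x N) * V N)
    (hαW : αW = ε * (Wn N - Wm N) / ((x N - x (N - 1)) / 2) + b (x N) * Wn N) :
    -- conclusion: the residual identity on each interior mesh interval
    ∀ k, 1 ≤ k → k ≤ N - 1 → ∀ t ∈ Ioo (x (k - 1)) (x k),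
      ε * (u' t - (U k - U (k - 1)) / (x k - x (k - 1)))
          + b t * (u t - Ubar t)
          + (∫ s in t..(1:ℝ), c s * (u s - Ubar s))
        = ((∫ s in t..(1:ℝ), (ψ s - ψhat s))
              + (x k - t) * (t - x (k - 1)) / 2 *
                  ((ψ (x k) - ψ (x (k - 1))) / (x k - x (k - 1))))
          + (bUbar t - b t * Ubar t)
          + (Γ k + Δ k)
          + ((x (k - 1) + x k) / 2 - t) *
              ((f ((x (k - 1) + x k) / 2)
                  - c ((x (k - 1) + x k) / 2) * Ubar ((x (k - 1) + x k) / 2))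
                + (b (x k) * U k - b (x (k - 1)) * U (k - 1)) / (x k - x (k - 1)))
          + (α - 2 * αW + αV) := by
  intro k hk hkN t ht
  have hkN' : k ≤ N := by omega
  have ht' : t ∈ Icc (x (k - 1)) (x k) := Ioo_subset_Icc_self ht
  have hsub : Icc t 1 ⊆ Icc 0 1 :=
    Icc_subset_Icc (hx0 ▸ (mesh_mem_Icc hmono (by omega : k - 1 ≤ N)).1.trans ht'.1) le_rfl
  have htle : t ≤ 1 := hxN ▸ ht'.2.trans (mesh_mem_Icc hmono hkN').2
  have hcUbar := intervalIntegrable_mul_piecewise_affine hmono (hx0 ▸ hxN ▸ hc) hUbar hk hkN' ht'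
  have hψhat_int := intervalIntegrable_piecewise_affine hmono hψhat hk hkN' ht'
  have hψhat_eq := integral_piecewise_affine hmono hψhat hk hkN' ht'
  rw [hxN] at hcUbar hψhat_int hψhat_eq
  have hres := integral_residual_eq htle (fun s hs => hbderiv s (hsub hs)) (hb'.mono hsub)
    (hc.mono hsub) (hf.mono hsub) (fun s hs => huderiv s (hsub hs))
    (fun s hs => hu'deriv s (hsub hs)) (hu''.mono hsub)
    (fun s hs => hode s ⟨(hsub (left_mem_Icc.2 htle)).1.trans_lt hs.1, hs.2⟩) hcUbar hψ hψhat_int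
  have hdisc := discrete_residual_eq hmono hschemeV hschemeW1 hschemeW2 hU hψ hk hkN
    (hΓ k) (hΔ k) hαV hαW
  linear_combination hres + hψhat_eq - hbUbar k hk hkN' t ht' - hdisc
    + ((x (k - 1) + x k) / 2 - t) * hψ ((x (k - 1) + x k) / 2) - hα

/-- exact residual identity: for `x ∈ I_k`, `k = 1,…,N-1`,
`(A(u - Ū))(x) = Ψ(x) + B(x) + Γ_k + Δ_k
  + (x_{k-1/2} - x)[(f - cŪ)_{k-1/2} + (bU)_{x,k}] + α - 2α^W + α^V`. -/
theorem stmt19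
    (ε β γ₀ γ₁ : ℝ) (hε : 0 < ε) (hβ : 0 < β)
    (b b' c f : ℝ → ℝ)
    (hbderiv : ∀ t ∈ Icc (0:ℝ) 1, HasDerivAt b (b' t) t)
    (hb' : ContinuousOn b' (Icc 0 1))
    (hc : ContinuousOn c (Icc 0 1)) (hf : ContinuousOn f (Icc 0 1))
    (hbβ : ∀ t ∈ Icc (0:ℝ) 1, β ≤ b t)
    (hc0 : ∀ t ∈ Icc (0:ℝ) 1, 0 ≤ c t)
    (hcb : ∀ t ∈ Icc (0:ℝ) 1, 0 ≤ c t - b' t)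
    -- the exact solution u ∈ C²[0,1]
    (u u' u'' : ℝ → ℝ)
    (huderiv : ∀ t ∈ Icc (0:ℝ) 1, HasDerivAt u (u' t) t)
    (hu'deriv : ∀ t ∈ Icc (0:ℝ) 1, HasDerivAt u' (u'' t) t)
    (hu'' : ContinuousOn u'' (Icc 0 1))
    (hode : ∀ t ∈ Ioo (0:ℝ) 1,
        -(ε * u'' t) - (b' t * u t + b t * u' t) + c t * u t = f t)
    (hu0 : u 0 = γ₀) (hu1 : u 1 = γ₁)
    -- the mesh
    (N : ℕ) (hN : 1 ≤ N) (x : ℕ → ℝ)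
    (hx0 : x 0 = 0) (hxN : x N = 1) (hmono : ∀ i < N, x i < x (i + 1))
    -- the coarse-mesh upwind solution V
    (V : ℕ → ℝ) (hV0 : V 0 = γ₀) (hVN : V N = γ₁)
    (hschemeV : ∀ i, 1 ≤ i → i ≤ N - 1 →
      -(ε / (x (i + 1) - x i)) *
          ((V (i + 1) - V i) / (x (i + 1) - x i) - (V i - V (i - 1)) / (x i - x (i - 1)))
        - (b (x (i + 1)) * V (i + 1) - b (x i) * V i) / (x (i + 1) - x i)
        + c (x i) * V i = f (x i))
    -- the bisected-mesh upwind solution W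
    (Wn Wm : ℕ → ℝ) (hW0 : Wn 0 = γ₀) (hWN : Wn N = γ₁)
    (hschemeW1 : ∀ i, i ≤ N - 1 →
      -(ε / ((x (i + 1) - x i) / 2)) *
          ((Wn (i + 1) - Wm (i + 1)) / ((x (i + 1) - x i) / 2)
            - (Wm (i + 1) - Wn i) / ((x (i + 1) - x i) / 2))
        - (b (x (i + 1)) * Wn (i + 1)
            - b ((x i + x (i + 1)) / 2) * Wm (i + 1)) / ((x (i + 1) - x i) / 2)
        + c ((x i + x (i + 1)) / 2) * Wm (i + 1) = f ((x i + x (i + 1)) / 2))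
    (hschemeW2 : ∀ i, 1 ≤ i → i ≤ N - 1 →
      -(ε / ((x (i + 1) - x i) / 2)) *
          ((Wm (i + 1) - Wn i) / ((x (i + 1) - x i) / 2)
            - (Wn i - Wm i) / ((x i - x (i - 1)) / 2))
        - (b ((x i + x (i + 1)) / 2) * Wm (i + 1) - b (x i) * Wn i)
            / ((x (i + 1) - x i) / 2)
        + c (x i) * Wn i = f (x i))
    -- U = 2W - V and its piecewise-linear interpolant
    (U : ℕ → ℝ) (hU : ∀ i, U i = 2 * Wn i - V i)
    (Ubar : ℝ → ℝ)
    (hUbar : ∀ i, 1 ≤ i → i ≤ N → ∀ t ∈ Icc (x (i - 1)) (x i),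
      Ubar t = (U (i - 1) + U i) / 2
        + (t - (x (i - 1) + x i) / 2) * ((U i - U (i - 1)) / (x i - x (i - 1))))
    -- ψ = f - cŪ and the interpolant ψ̂
    (ψ : ℝ → ℝ) (hψ : ∀ t, ψ t = f t - c t * Ubar t)
    (ψhat : ℝ → ℝ)
    (hψhat : ∀ i, 1 ≤ i → i ≤ N → ∀ t ∈ Ioo (x (i - 1)) (x i),
      ψhat t = ψ ((x (i - 1) + x i) / 2)
        + (t - (x (i - 1) + x i) / 2) * ((ψ (x i) - ψ (x (i - 1))) / (x i - x (i - 1))))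
    (hψhatint : IntervalIntegrable ψhat volume 0 1)
    -- the interpolant of the nodal values b(x_i) U_i, and B = bU-bar - bŪ
    (bUbar : ℝ → ℝ)
    (hbUbar : ∀ i, 1 ≤ i → i ≤ N → ∀ t ∈ Icc (x (i - 1)) (x i),
      bUbar t = (b (x (i - 1)) * U (i - 1) + b (x i) * U i) / 2
        + (t - (x (i - 1) + x i) / 2) *
            ((b (x i) * U i - b (x (i - 1)) * U (i - 1)) / (x i - x (i - 1))))
    -- the terms Γ_k and Δ_k
    (Γ Δ : ℕ → ℝ)
    (hΓ : ∀ k, Γ k =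
      (∑ i ∈ Finset.Icc k (N - 1), (x (i + 1) - x i) *
          (c ((x i + x (i + 1)) / 2) * (Wm (i + 1) - Ubar ((x i + x (i + 1)) / 2))
            + c (x i) * (Wn i - V i)))
        + (x k - x (k - 1)) / 2 *
            (c ((x (k - 1) + x k) / 2) * (Wm k - Ubar ((x (k - 1) + x k) / 2))))
    (hΔ : ∀ k, Δ k =
      b ((x (k - 1) + x k) / 2) * Wm k - b (x (k - 1)) * Wn (k - 1)
        - (b (x k) * V k - b (x (k - 1)) * V (k - 1)) / 2)
    -- the constants α, α^V, α^W
    (α αV αW : ℝ)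
    (hα : α = ε * u' 1 + b 1 * u 1)
    (hαV : αV = ε * (V N - V (N - 1)) / (x N - x (N - 1)) + b (x N) * V N)
    (hαW : αW = ε * (Wn N - Wm N) / ((x N - x (N - 1)) / 2) + b (x N) * Wn N) :
    -- conclusion: the residual identity on each interior mesh interval
    ∀ k, 1 ≤ k → k ≤ N - 1 → ∀ t ∈ Ioo (x (k - 1)) (x k),
      ε * (u' t - (U k - U (k - 1)) / (x k - x (k - 1)))
          + b t * (u t - Ubar t)
          + (∫ s in t..(1:ℝ), c s * (u s - Ubar s))
        = ((∫ s in t..(1:ℝ), (ψ s - ψhat s))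
              + (x k - t) * (t - x (k - 1)) / 2 *
                  ((ψ (x k) - ψ (x (k - 1))) / (x k - x (k - 1))))
          + (bUbar t - b t * Ubar t)
          + (Γ k + Δ k)
          + ((x (k - 1) + x k) / 2 - t) *
              ((f ((x (k - 1) + x k) / 2)
                  - c ((x (k - 1) + x k) / 2) * Ubar ((x (k - 1) + x k) / 2))
                + (b (x k) * U k - b (x (k - 1)) * U (k - 1)) / (x k - x (k - 1)))
          + (α - 2 * αW + αV) :=
  stmt19_general ε b b' c f hbderiv hb' hc hf u u' u'' huderiv hu'deriv hu'' hode N x hx0 hxN hmono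
    V hschemeV Wn Wm hschemeW1 hschemeW2 U hU Ubar hUbar ψ hψ ψhat hψhat bUbar hbUbar Γ Δ hΓ hΔ α αV
    αW hα hαV hαW
end
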